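/- Let Γ=(G,σ) be a weighted signed graph with at least one edge. Then the largest eigenvalue of the signed Laplacian satisfies λ_N(L^σ) ≤ ½ · max_{u∼v} [ d(u) + d(v) + Σ_{u'∼u, u'≁v} w(u',u) + Σ_{u'∼u, u'∼v, σ(u',u)σ(u',v)=−σ(u,v)} w(u',u) + Σ_{u'∼v, u'≁u} w(u',v) + Σ_{u'∼u, u'∼v, σ(u',u)σ(u',v)=−σ(u,v)} w(u',v) + Σ_{u'∼u, u'∼v, σ(u',u)σ(u',v)=σ(u,v)} |w(u',u) − w(u',v)| ], where the maximum runs over all adjacent pairs u ∼ v. -/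

import Mathlib

open Finset Real

open scoped Classical

noncomputable section

namespace SignedGraph

variable {N : ℕ}

/-- The degree `d(u) = Σ_v w(u,v)` of a vertex. -/
def deg (w : Fin N → Fin N → ℝ) (u : Fin N) : ℝ := ∑ v, w u v

/-- Hypotheses making `(w, sgn)` a weighted signed graph: `w` is a symmetric nonnegative
weight function vanishing on the diagonal and `sgn` is a symmetric `±1`-valued signature. -/
structure IsWSG {N : ℕ} (w : Fin N → Fin N → ℝ) (sgn : Fin N → Fin N → ℝ) : Prop where
  w_symm : ∀ u v, w u v = w v u
  w_nonneg : ∀ u v, 0 ≤ w u v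
  w_loopless : ∀ u, w u u = 0
  sgn_symm : ∀ u v, sgn u v = sgn v u
  sgn_pm : ∀ u v, sgn u v = 1 ∨ sgn u v = -1

/-- The signature obtained from `sgn` by switching with the function `θ : V → {±1}`. -/
def switchSgn (sgn : Fin N → Fin N → ℝ) (θ : Fin N → ℝ) : Fin N → Fin N → ℝ :=
  fun u v => θ u * sgn u v * θ v

/-- The signed adjacency matrix `A^σ`, `A^σ_{uv} = σ(u,v) w(u,v)`. -/
def adj (w sgn : Fin N → Fin N → ℝ) : Matrix (Fin N) (Fin N) ℝ :=
  Matrix.of fun u v => sgn u v * w u v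

/-- The symmetric form `I - D^{-1/2} A^σ D^{-1/2}` of the signed normalized Laplacian,
whose eigenvalues are those of `Δ^σ = I - D^{-1} A^σ`. -/
def nlapSym (w sgn : Fin N → Fin N → ℝ) : Matrix (Fin N) (Fin N) ℝ :=
  Matrix.of fun u v =>
    (if u = v then (1 : ℝ) else 0) -
      sgn u v * w u v / (Real.sqrt (deg w u) * Real.sqrt (deg w v))

/-- The signed (Kirchhoff) Laplacian `L^σ = D - A^σ`. -/
def lap (w sgn : Fin N → Fin N → ℝ) : Matrix (Fin N) (Fin N) ℝ :=
  Matrix.diagonal (deg w) - adj w sgn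

/-- The nondecreasing enumeration of the eigenvalues (with multiplicity) of a real
symmetric matrix; junk value `0` if the matrix is not symmetric.  `evals M ⟨k-1,_⟩`
is the `k`-th smallest eigenvalue `λ_k(M)`. -/
def evals (M : Matrix (Fin N) (Fin N) ℝ) : Fin N → ℝ :=
  if h : M.IsHermitian then (fun i => h.eigenvalues (Tuple.sort h.eigenvalues i)) else 0

/-!
Take an eigenvector `x` for `λ_N > 0` and an edge `uv` maximizing `m = |x u - σ(u,v) x v|`
among all edges. Then `λ (x u - σ(u,v) x v) = (L x) u - σ(u,v) (L x) v` is a sum over `b` of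
`w(u,b) (x u - σ(u,b) x b) - σ(u,v) w(v,b) (x v - σ(v,b) x b)`. The triangle inequality bounds
this summand by `(w(u,b) + w(v,b)) m`, and when `b` closes a balanced triangle with `uv` a
regrouping through `x u - σ(u,v) x v` improves it to `max (w(u,b), w(v,b)) m`. Summing over `b`
gives `2 λ m ≤ [bracket of uv] · m`, and `m > 0` unless `x` is balanced on every edge, in which
case `L x = 0`.
-/

open scoped Matrix

theorem exists_mulVec_eq_evals_smul {M : Matrix (Fin N) (Fin N) ℝ}
    (hM : M.IsHermitian) (k : Fin N) : ∃ x ≠ 0, M *ᵥ x = evals M k • x := by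
  set i := Tuple.sort hM.eigenvalues k
  refine ⟨hM.eigenvectorBasis i, fun h => ?_, ?_⟩
  · exact hM.eigenvectorBasis.orthonormal.ne_zero i (WithLp.ofLp_injective 2 h)
  · rw [evals, dif_pos hM]
    exact hM.mulVec_eigenvectorBasis i

theorem two_mul_abs_mul_sub_mul_le {a b A B s m : ℝ} (ha : 0 ≤ a) (hb : 0 ≤ b) (hs : |s| = 1)
    (hA : |A| ≤ m) (hB : |B| ≤ m) (hAB : |A - s * B| ≤ m) :
    2 * |a * A - s * (b * B)| ≤ (a + b + |a - b|) * m := by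
  have hsB : |s * B| ≤ m := by rwa [abs_mul, hs, one_mul]
  rcases le_total a b with hab | hab
  · have : |a * A - s * (b * B)| ≤ a * m + (b - a) * m :=
      calc |a * A - s * (b * B)| = |a * (A - s * B) - (b - a) * (s * B)| := by ring_nf
        _ ≤ |a * (A - s * B)| + |(b - a) * (s * B)| := abs_sub _ _
        _ ≤ a * m + (b - a) * m := by
          rw [abs_mul, abs_mul, abs_of_nonneg ha, abs_of_nonneg (sub_nonneg.2 hab)]
          gcongr
    rw [abs_of_nonpos (sub_nonpos.2 hab)]
    linarith
  · have : |a * A - s * (b * B)| ≤ b * m + (a - b) * m :=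
      calc |a * A - s * (b * B)| = |b * (A - s * B) + (a - b) * A| := by ring_nf
        _ ≤ |b * (A - s * B)| + |(a - b) * A| := abs_add_le _ _
        _ ≤ b * m + (a - b) * m := by
          rw [abs_mul, abs_mul, abs_of_nonneg hb, abs_of_nonneg (sub_nonneg.2 hab)]
          gcongr
    rw [abs_of_nonneg (sub_nonneg.2 hab)]
    linarith

def edgeBoundTerm (w sgn : Fin N → Fin N → ℝ) (u v b : Fin N) : ℝ :=
  w u b + w v b
    + (if 0 < w b u ∧ ¬ 0 < w b v then w b u else 0)
    + (if 0 < w b u ∧ 0 < w b v ∧ sgn b u * sgn b v = -sgn u v then w b u else 0)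
    + (if 0 < w b v ∧ ¬ 0 < w b u then w b v else 0)
    + (if 0 < w b u ∧ 0 < w b v ∧ sgn b u * sgn b v = -sgn u v then w b v else 0)
    + (if 0 < w b u ∧ 0 < w b v ∧ sgn b u * sgn b v = sgn u v then |w b u - w b v| else 0)

theorem sum_edgeBoundTerm (w sgn : Fin N → Fin N → ℝ) (u v : Fin N) :
    ∑ b, edgeBoundTerm w sgn u v b = deg w u + deg w v
      + (∑ u', if 0 < w u' u ∧ ¬ 0 < w u' v then w u' u else 0)
      + (∑ u', if 0 < w u' u ∧ 0 < w u' v ∧ sgn u' u * sgn u' v = -sgn u v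
          then w u' u else 0)
      + (∑ u', if 0 < w u' v ∧ ¬ 0 < w u' u then w u' v else 0)
      + (∑ u', if 0 < w u' u ∧ 0 < w u' v ∧ sgn u' u * sgn u' v = -sgn u v
          then w u' v else 0)
      + (∑ u', if 0 < w u' u ∧ 0 < w u' v ∧ sgn u' u * sgn u' v = sgn u v
          then |w u' u - w u' v| else 0) := by
  simp only [edgeBoundTerm, Finset.sum_add_distrib, deg]

section

variable {w sgn : Fin N → Fin N → ℝ}

theorem IsWSG.abs_sgn (hG : IsWSG w sgn) (u v : Fin N) : |sgn u v| = 1 := by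
  rcases hG.sgn_pm u v with h | h <;> simp [h]

theorem IsWSG.eq_zero_of_not_pos (hG : IsWSG w sgn) {u v : Fin N} (h : ¬ 0 < w u v) :
    w u v = 0 :=
  le_antisymm (not_lt.1 h) (hG.w_nonneg u v)

theorem IsWSG.sgn_mul_sgn_eq_neg_of_ne (hG : IsWSG w sgn) {a b c : Fin N}
    (h : sgn a b * sgn a c ≠ sgn b c) : sgn a b * sgn a c = -sgn b c := by
  rcases hG.sgn_pm a b with h1 | h1 <;> rcases hG.sgn_pm a c with h2 | h2 <;>
    rcases hG.sgn_pm b c with h3 | h3 <;> simp_all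

theorem lap_isHermitian (hG : IsWSG w sgn) : (lap w sgn).IsHermitian := by
  refine Matrix.IsHermitian.ext fun i j => ?_
  simp only [lap, adj, Matrix.sub_apply, Matrix.diagonal_apply, Matrix.of_apply, star_trivial,
    hG.w_symm j i, hG.sgn_symm j i]
  by_cases h : i = j <;> simp [h, eq_comm]

theorem lap_mulVec_apply (x : Fin N → ℝ) (a : Fin N) :
    (lap w sgn *ᵥ x) a = ∑ b, w a b * (x a - sgn a b * x b) := by
  rw [lap, Matrix.sub_mulVec, Pi.sub_apply, Matrix.mulVec_diagonal, deg, Finset.sum_mul,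
    adj, Matrix.mulVec, dotProduct, ← Finset.sum_sub_distrib]
  exact Finset.sum_congr rfl fun b _ => by rw [Matrix.of_apply]; ring

theorem lap_mulVec_eq_zero_of_balanced (hG : IsWSG w sgn) {x : Fin N → ℝ}
    (hx : ∀ a c, 0 < w a c → x a = sgn a c * x c) : lap w sgn *ᵥ x = 0 := by
  ext a
  rw [lap_mulVec_apply, Pi.zero_apply]
  refine Finset.sum_eq_zero fun b _ => ?_
  rcases (hG.w_nonneg a b).lt_or_eq with hab | hab
  · rw [hx a b hab, sub_self, mul_zero]
  · rw [← hab, zero_mul]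

theorem edgeBoundTerm_of_balanced_triangle (hG : IsWSG w sgn) {u v b : Fin N}
    (h : 0 < w b u ∧ 0 < w b v ∧ sgn b u * sgn b v = sgn u v) :
    edgeBoundTerm w sgn u v b = w u b + w v b + |w u b - w v b| := by
  obtain ⟨hu, hv, hs⟩ := h
  have hne : sgn u v ≠ -sgn u v := by
    rcases hG.sgn_pm u v with h' | h' <;> norm_num [h']
  rw [edgeBoundTerm, hG.w_symm u b, hG.w_symm v b]
  simp [hu, hv, hs, hne]

theorem edgeBoundTerm_of_not_balanced_triangle (hG : IsWSG w sgn) {u v b : Fin N}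
    (h : ¬ (0 < w b u ∧ 0 < w b v ∧ sgn b u * sgn b v = sgn u v)) :
    edgeBoundTerm w sgn u v b = 2 * (w u b + w v b) := by
  rw [edgeBoundTerm, if_neg h, hG.w_symm u b, hG.w_symm v b]
  by_cases hu : 0 < w b u <;> by_cases hv : 0 < w b v
  · have hneg := hG.sgn_mul_sgn_eq_neg_of_ne fun hs => h ⟨hu, hv, hs⟩
    simp only [hu, hv, hneg, not_true, and_self, and_false, if_true, if_false]
    ring
  · simp [hu, hG.eq_zero_of_not_pos hv, two_mul]
  · simp [hv, hG.eq_zero_of_not_pos hu, two_mul]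
  · simp [hG.eq_zero_of_not_pos hu, hG.eq_zero_of_not_pos hv]

theorem edgeBoundTerm_nonneg (hG : IsWSG w sgn) (u v b : Fin N) :
    0 ≤ edgeBoundTerm w sgn u v b := by
  have := hG.w_nonneg u b
  have := hG.w_nonneg v b
  by_cases h : 0 < w b u ∧ 0 < w b v ∧ sgn b u * sgn b v = sgn u v
  · rw [edgeBoundTerm_of_balanced_triangle hG h]
    positivity
  · rw [edgeBoundTerm_of_not_balanced_triangle hG h]
    positivity

theorem mul_abs_sub_le_of_forall_edge (hG : IsWSG w sgn) {x : Fin N → ℝ} {m : ℝ}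
    (hm : ∀ a c, 0 < w a c → |x a - sgn a c * x c| ≤ m) (a c : Fin N) :
    w a c * |x a - sgn a c * x c| ≤ w a c * m := by
  rcases (hG.w_nonneg a c).lt_or_eq with hac | hac
  · exact mul_le_mul_of_nonneg_left (hm a c hac) hac.le
  · rw [← hac, zero_mul, zero_mul]

theorem two_mul_abs_sub_lap_summand_le (hG : IsWSG w sgn) {x : Fin N → ℝ} {m : ℝ}
    (hm : ∀ a c, 0 < w a c → |x a - sgn a c * x c| ≤ m) {u v : Fin N} (huv : 0 < w u v)
    (b : Fin N) :
    2 * |w u b * (x u - sgn u b * x b) - sgn u v * (w v b * (x v - sgn v b * x b))| ≤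
      edgeBoundTerm w sgn u v b * m := by
  by_cases htri : 0 < w b u ∧ 0 < w b v ∧ sgn b u * sgn b v = sgn u v
  · rw [edgeBoundTerm_of_balanced_triangle hG htri]
    obtain ⟨hbu, hbv, hs⟩ := htri
    have hsgn : sgn u v * sgn v b = sgn u b := by
      have hsq : sgn v b * sgn v b = 1 := by rcases hG.sgn_pm v b with h | h <;> simp [h]
      rw [← hs, hG.sgn_symm b u, hG.sgn_symm b v]
      linear_combination sgn u b * hsq
    refine two_mul_abs_mul_sub_mul_le (hG.w_nonneg u b) (hG.w_nonneg v b) (hG.abs_sgn u v)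
      (hm u b (hG.w_symm u b ▸ hbu)) (hm v b (hG.w_symm v b ▸ hbv)) ?_
    -- since σ(u,v)σ(v,b) = σ(u,b), the two differences telescope to x u - σ(u,v) x v
    convert hm u v huv using 2
    linear_combination x b * hsgn
  · rw [edgeBoundTerm_of_not_balanced_triangle hG htri]
    have hu := mul_abs_sub_le_of_forall_edge hG hm u b
    have hv := mul_abs_sub_le_of_forall_edge hG hm v b
    calc 2 * |w u b * (x u - sgn u b * x b) - sgn u v * (w v b * (x v - sgn v b * x b))|
        ≤ 2 * (|w u b * (x u - sgn u b * x b)| + |sgn u v * (w v b * (x v - sgn v b * x b))|) :=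
          by gcongr; exact abs_sub _ _
      _ = 2 * (w u b * |x u - sgn u b * x b| + w v b * |x v - sgn v b * x b|) := by
          rw [abs_mul, abs_mul, abs_mul, hG.abs_sgn, one_mul, abs_of_nonneg (hG.w_nonneg u b),
            abs_of_nonneg (hG.w_nonneg v b)]
      _ ≤ 2 * (w u b + w v b) * m := by linarith

theorem exists_two_mul_le_sum_edgeBoundTerm (hG : IsWSG w sgn) {x : Fin N → ℝ} (hx : x ≠ 0)
    {μ : ℝ} (hμ : 0 < μ) (hmul : lap w sgn *ᵥ x = μ • x) :
    ∃ u v, 0 < w u v ∧ 2 * μ ≤ ∑ b, edgeBoundTerm w sgn u v b := by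
  obtain ⟨a, c, hac, hxac⟩ : ∃ a c, 0 < w a c ∧ x a ≠ sgn a c * x c := by
    by_contra! h
    have : μ • x = 0 := hmul ▸ lap_mulVec_eq_zero_of_balanced hG h
    exact hx ((smul_eq_zero.1 this).resolve_left hμ.ne')
  obtain ⟨⟨u, v⟩, huv, hmax⟩ := Finset.exists_max_image {p | 0 < w p.1 p.2}
    (fun p : Fin N × Fin N => |x p.1 - sgn p.1 p.2 * x p.2|) ⟨(a, c), by simpa using hac⟩
  rw [Finset.mem_filter] at huv
  set m := |x u - sgn u v * x v|
  have hm : ∀ a c, 0 < w a c → |x a - sgn a c * x c| ≤ m := fun a c h =>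
    hmax (a, c) (by simpa using h)
  have hm_pos : 0 < m := (abs_pos.2 (sub_ne_zero.2 hxac)).trans_le (hm a c hac)
  have hrow : μ * (x u - sgn u v * x v) =
      ∑ b, (w u b * (x u - sgn u b * x b) - sgn u v * (w v b * (x v - sgn v b * x b))) := by
    have hu := congrFun hmul u
    have hv := congrFun hmul v
    rw [lap_mulVec_apply, Pi.smul_apply, smul_eq_mul] at hu hv
    rw [Finset.sum_sub_distrib, ← Finset.mul_sum, hu, hv]
    ring
  refine ⟨u, v, huv.2, le_of_mul_le_mul_right ?_ hm_pos⟩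
  calc 2 * μ * m = 2 * |μ * (x u - sgn u v * x v)| := by rw [abs_mul, abs_of_pos hμ]; ring
    _ ≤ ∑ b, 2 * |w u b * (x u - sgn u b * x b) - sgn u v * (w v b * (x v - sgn v b * x b))| := by
      rw [hrow, ← Finset.mul_sum]
      gcongr
      exact Finset.abs_sum_le_sum_abs _ _
    _ ≤ ∑ b, edgeBoundTerm w sgn u v b * m :=
      Finset.sum_le_sum fun b _ => two_mul_abs_sub_lap_summand_le hG hm huv.2 b
    _ = (∑ b, edgeBoundTerm w sgn u v b) * m := (Finset.sum_mul _ _ _).symm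

end

/-- For a weighted signed graph with at least one edge, the largest
eigenvalue of the signed Laplacian `L^σ` is at most
`½ max_{u∼v} [ d(u) + d(v) + Σ_{u'∼u, u'≁v} w(u',u)
  + Σ_{u'∼u, u'∼v, σ(u',u)σ(u',v) = −σ(u,v)} w(u',u)
  + Σ_{u'∼v, u'≁u} w(u',v) + Σ_{u'∼u, u'∼v, σ(u',u)σ(u',v) = −σ(u,v)} w(u',v)
  + Σ_{u'∼u, u'∼v, σ(u',u)σ(u',v) = σ(u,v)} |w(u',u) − w(u',v)| ]`. -/
theorem lap_top_eigenvalue_bound {N : ℕ} (hN : 0 < N) (w sgn : Fin N → Fin N → ℝ)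
    (hG : IsWSG w sgn) :
    evals (lap w sgn) ⟨N - 1, by omega⟩ ≤
      1 / 2 * sSup {x | ∃ u v, 0 < w u v ∧
        x = deg w u + deg w v
          + (∑ u', if 0 < w u' u ∧ ¬ 0 < w u' v then w u' u else 0)
          + (∑ u', if 0 < w u' u ∧ 0 < w u' v ∧ sgn u' u * sgn u' v = -sgn u v
              then w u' u else 0)
          + (∑ u', if 0 < w u' v ∧ ¬ 0 < w u' u then w u' v else 0)
          + (∑ u', if 0 < w u' u ∧ 0 < w u' v ∧ sgn u' u * sgn u' v = -sgn u v
              then w u' v else 0)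
          + (∑ u', if 0 < w u' u ∧ 0 < w u' v ∧ sgn u' u * sgn u' v = sgn u v
              then |w u' u - w u' v| else 0)} := by
  simp only [← sum_edgeBoundTerm]
  obtain ⟨x, hx, hmul⟩ := exists_mulVec_eq_evals_smul (lap_isHermitian hG) ⟨N - 1, by omega⟩
  rcases le_or_gt (evals (lap w sgn) ⟨N - 1, by omega⟩) 0 with hμ | hμ
  · refine hμ.trans (mul_nonneg (by norm_num) (Real.sSup_nonneg ?_))
    rintro _ ⟨u, v, -, rfl⟩
    exact Finset.sum_nonneg fun b _ => edgeBoundTerm_nonneg hG u v b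
  · obtain ⟨u, v, huv, hle⟩ := exists_two_mul_le_sum_edgeBoundTerm hG hx hμ hmul
    have hbdd : BddAbove {x | ∃ u v, 0 < w u v ∧ x = ∑ b, edgeBoundTerm w sgn u v b} :=
      ((Set.finite_range fun p : Fin N × Fin N => ∑ b, edgeBoundTerm w sgn p.1 p.2 b).subset
        (by rintro _ ⟨u, v, -, rfl⟩; exact ⟨(u, v), rfl⟩)).bddAbove
    have := le_csSup hbdd ⟨u, v, huv, rfl⟩
    linarith

end SignedGraph
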